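/- There exists δ > 0 such that for every w = (w₁, w₂) ∈ M with w₁ ≠ 0, w₂ ≠ 0 and dist(w, S) < δ: θ₁‖w₁^⊥‖² + θ₂‖w₂^⊥‖² + (θ₁ + θ₂)‖w₁^⊥‖‖w₂^⊥‖ ≥ 2π · f(w). (Since on M near S the gradient of f is ∇f(w) = (1/(2π))(θ₁w₁ − θ₂w₂, θ₂w₂ − θ₁w₁) and w − P_S(w) = (w₁^⊥, w₂^⊥), this is the aiming inequality ⟨∇f(w), w − P_S(w)⟩ ≥ f(w).) -/

import Mathlib

open scoped RealInnerProductSpace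
open InnerProductGeometry

/-- Closed form of the population loss for learning a single ReLU neuron with two
student neurons under Gaussian inputs. -/
noncomputable def nnLoss {d : ℕ} (v : EuclideanSpace ℝ (Fin d))
    (w : EuclideanSpace ℝ (Fin d) × EuclideanSpace ℝ (Fin d)) : ℝ :=
  (1 / 4) * ‖w.1 + w.2 - v‖ ^ 2 +
    (1 / (2 * Real.pi)) *
      ((Real.sin (angle w.1 w.2) - angle w.1 w.2 * Real.cos (angle w.1 w.2)) *
          ‖w.1‖ * ‖w.2‖ -
        ((Real.sin (angle w.1 v) - angle w.1 v * Real.cos (angle w.1 v)) * ‖w.1‖ * ‖v‖ +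
          (Real.sin (angle w.2 v) - angle w.2 v * Real.cos (angle w.2 v)) * ‖w.2‖ * ‖v‖))

/-- The affine subspace (ravine) `M = {(w₁, w₂) : w₁ + w₂ = v}`. -/
def nnRavine {d : ℕ} (v : EuclideanSpace ℝ (Fin d)) :
    Set (EuclideanSpace ℝ (Fin d) × EuclideanSpace ℝ (Fin d)) :=
  {w | w.1 + w.2 = v}

/-- The set of minimizers `S`. -/
def nnSol {d : ℕ} (v : EuclideanSpace ℝ (Fin d)) :
    Set (EuclideanSpace ℝ (Fin d) × EuclideanSpace ℝ (Fin d)) :=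
  {w | w.1 + w.2 = v ∧ ⟪w.1, v⟫ = ‖w.1‖ * ‖v‖ ∧ ⟪w.2, v⟫ = ‖w.2‖ * ‖v‖ ∧
    ‖v‖ / 8 ≤ ‖w.1‖ ∧ ‖w.1‖ ≤ 2 * ‖v‖ ∧ ‖v‖ / 8 ≤ ‖w.2‖ ∧ ‖w.2‖ ≤ 2 * ‖v‖}

/-- Euclidean distance on `ℝ^d × ℝ^d`. -/
noncomputable def nnDist {d : ℕ}
    (w w' : EuclideanSpace ℝ (Fin d) × EuclideanSpace ℝ (Fin d)) : ℝ :=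
  Real.sqrt (‖w.1 - w'.1‖ ^ 2 + ‖w.2 - w'.2‖ ^ 2)

/-- Euclidean distance from `w` to the solution set `S`. -/
noncomputable def nnDistSol {d : ℕ} (v : EuclideanSpace ℝ (Fin d))
    (w : EuclideanSpace ℝ (Fin d) × EuclideanSpace ℝ (Fin d)) : ℝ :=
  sInf (nnDist w '' nnSol v)

/-- `u^⊥`: the orthogonal projection of `u` onto the orthogonal complement of
`span{v}` (for `v ≠ 0`). -/
noncomputable def perpPart {d : ℕ} (v u : EuclideanSpace ℝ (Fin d)) :
    EuclideanSpace ℝ (Fin d) :=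
  u - ((⟪u, v⟫ / ‖v‖ ^ 2) • v)

/-!
On the ravine write `a = ‖w₁‖`, `b = ‖w₂‖`, `θᵢ = ∠(wᵢ, v)` and `g t = sin t - t cos t`. Then
`‖v‖ = a cos θ₁ + b cos θ₂` and `a sin θ₁ = b sin θ₂ = ‖wᵢ^⊥‖`. Near `S` both `wᵢ` make an acute
angle with `v`; they then lie in one plane on opposite sides of `v`, so `θ₁₂ = θ₁ + θ₂`. The
addition formulas turn `g (θ₁ + θ₂) - g θ₁ cos θ₂ - g θ₂ cos θ₁` into `(θ₁ + θ₂) sin θ₁ sin θ₂`,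
whence the exact identity
`2π f(w) = (θ₁ + θ₂) ‖w₁^⊥‖ ‖w₂^⊥‖ - a² g θ₁ cos θ₁ - b² g θ₂ cos θ₂`,
and the last two terms are nonpositive for acute angles.
-/

open Real

lemma mul_cos_le_sin_of_le_pi_div_two {x : ℝ} (h₀ : 0 ≤ x) (h₁ : x ≤ π / 2) :
    x * cos x ≤ sin x := by
  rcases h₁.lt_or_eq with h₁ | rfl
  · have hcos : 0 < cos x := cos_pos_of_mem_Ioo ⟨by linarith [pi_pos], h₁⟩
    have htan := le_tan h₀ h₁
    rwa [tan_eq_sin_div_cos, le_div_iff₀ hcos] at htan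
  · simp

lemma sin_sub_mul_cos_add_sub (x y : ℝ) :
    (sin (x + y) - (x + y) * cos (x + y)) - (sin x - x * cos x) * cos y
      - (sin y - y * cos y) * cos x = (x + y) * sin x * sin y := by
  rw [sin_add, cos_add]
  ring

lemma sin_sub_mul_cos_add_mul_sub_le {a b x y V : ℝ} (hV : V = a * cos x + b * cos y)
    (hx₀ : 0 ≤ x) (hx₁ : x ≤ π / 2) (hy₀ : 0 ≤ y) (hy₁ : y ≤ π / 2) :
    (sin (x + y) - (x + y) * cos (x + y)) * a * b
        - ((sin x - x * cos x) * a * V + (sin y - y * cos y) * b * V)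
      ≤ (x + y) * (a * sin x) * (b * sin y) := by
  have hgx : 0 ≤ (sin x - x * cos x) * cos x :=
    mul_nonneg (sub_nonneg.2 (mul_cos_le_sin_of_le_pi_div_two hx₀ hx₁))
      (cos_nonneg_of_mem_Icc ⟨by linarith [pi_pos], hx₁⟩)
  have hgy : 0 ≤ (sin y - y * cos y) * cos y :=
    mul_nonneg (sub_nonneg.2 (mul_cos_le_sin_of_le_pi_div_two hy₀ hy₁))
      (cos_nonneg_of_mem_Icc ⟨by linarith [pi_pos], hy₁⟩)
  have hexpand : (sin (x + y) - (x + y) * cos (x + y)) * a * b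
        - ((sin x - x * cos x) * a * V + (sin y - y * cos y) * b * V)
      = (x + y) * (a * sin x) * (b * sin y)
        - a ^ 2 * ((sin x - x * cos x) * cos x) - b ^ 2 * ((sin y - y * cos y) * cos y) := by
    rw [hV]
    linear_combination a * b * sin_sub_mul_cos_add_sub x y
  rw [hexpand]
  linarith [mul_nonneg (sq_nonneg a) hgx, mul_nonneg (sq_nonneg b) hgy]

section InnerProductSpace

variable {F : Type*} [NormedAddCommGroup F] [InnerProductSpace ℝ F]

lemma angle_le_pi_div_two_of_inner_nonneg {u v : F} (h : 0 ≤ ⟪u, v⟫) :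
    angle u v ≤ π / 2 :=
  arccos_le_pi_div_two.2 (div_nonneg h (by positivity))

lemma norm_mul_sin_angle_mul_norm_sq (u v : F) :
    (‖u‖ * sin (angle u v) * ‖v‖) ^ 2 = ‖u‖ ^ 2 * ‖v‖ ^ 2 - ⟪u, v⟫ ^ 2 := by
  have hcos := cos_angle_mul_norm_mul_norm u v
  linear_combination (‖u‖ * ‖v‖) ^ 2 * sin_sq_add_cos_sq (angle u v)
    - (⟪u, v⟫ + cos (angle u v) * (‖u‖ * ‖v‖)) * hcos

variable {v w₁ w₂ : F}

lemma norm_mul_sin_angle_eq_of_add_eq (h : w₁ + w₂ = v) (hv : v ≠ 0) :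
    ‖w₁‖ * sin (angle w₁ v) = ‖w₂‖ * sin (angle w₂ v) := by
  have hV : 0 < ‖v‖ := norm_pos_iff.2 hv
  have hw₂ : w₂ = v - w₁ := eq_sub_of_add_eq' h
  have hsq : (‖w₁‖ * sin (angle w₁ v) * ‖v‖) ^ 2 = (‖w₂‖ * sin (angle w₂ v) * ‖v‖) ^ 2 := by
    rw [norm_mul_sin_angle_mul_norm_sq, norm_mul_sin_angle_mul_norm_sq, hw₂, norm_sub_sq_real,
      inner_sub_left, real_inner_self_eq_norm_sq, real_inner_comm v w₁]
    ring
  have hnn : ∀ u : F, 0 ≤ ‖u‖ * sin (angle u v) * ‖v‖ := fun u =>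
    mul_nonneg (mul_nonneg (norm_nonneg u) (sin_angle_nonneg u v)) hV.le
  exact mul_right_cancel₀ hV.ne' ((sq_eq_sq₀ (hnn w₁) (hnn w₂)).1 hsq)

lemma angle_eq_angle_add_angle_of_add_eq (h : w₁ + w₂ = v) (hv : v ≠ 0) (h₁ : w₁ ≠ 0)
    (h₂ : w₂ ≠ 0) (hi₁ : 0 ≤ ⟪w₁, v⟫) (hi₂ : 0 ≤ ⟪w₂, v⟫) :
    angle w₁ w₂ = angle w₁ v + angle w₂ v := by
  have hx := angle_le_pi_div_two_of_inner_nonneg hi₁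
  have hy := angle_le_pi_div_two_of_inner_nonneg hi₂
  refine injOn_cos ⟨angle_nonneg _ _, angle_le_pi _ _⟩
    ⟨add_nonneg (angle_nonneg _ _) (angle_nonneg _ _), by linarith⟩ ?_
  have hpos : 0 < ‖w₁‖ * ‖w₂‖ * ‖v‖ ^ 2 := by
    have := norm_pos_iff.2 h₁; have := norm_pos_iff.2 h₂; have := norm_pos_iff.2 hv
    positivity
  refine mul_right_cancel₀ hpos.ne' ?_
  have hw₂ : w₂ = v - w₁ := eq_sub_of_add_eq' h
  have h₁₂ : ⟪w₁, w₂⟫ = ⟪w₁, v⟫ - ‖w₁‖ ^ 2 := by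
    rw [hw₂, inner_sub_right, real_inner_self_eq_norm_sq]
  have h₂v : ⟪w₂, v⟫ = ‖v‖ ^ 2 - ⟪w₁, v⟫ := by
    rw [hw₂, inner_sub_left, real_inner_self_eq_norm_sq, real_inner_comm]
  have hsin := norm_mul_sin_angle_eq_of_add_eq h hv
  have hsq := norm_mul_sin_angle_mul_norm_sq w₁ v
  rw [cos_add]
  linear_combination ‖v‖ ^ 2 * cos_angle_mul_norm_mul_norm w₁ w₂
    - cos_angle_mul_norm_mul_norm w₁ v * cos (angle w₂ v) * (‖w₂‖ * ‖v‖)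
    - ⟪w₁, v⟫ * cos_angle_mul_norm_mul_norm w₂ v
    - (‖w₁‖ * sin (angle w₁ v) * ‖v‖ ^ 2) * hsin + hsq + ‖v‖ ^ 2 * h₁₂ - ⟪w₁, v⟫ * h₂v

lemma inner_pos_of_norm_sub_lt {u s : F} (hv : v ≠ 0) (hs : ⟪s, v⟫ = ‖s‖ * ‖v‖)
    (hu : ‖u - s‖ < ‖s‖) : 0 < ⟪u, v⟫ := by
  have hV : 0 < ‖v‖ := norm_pos_iff.2 hv
  have hcs := neg_le_of_abs_le (abs_real_inner_le_norm (u - s) v)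
  rw [inner_sub_left] at hcs
  nlinarith

end InnerProductSpace

section Ravine

variable {d : ℕ} {v : EuclideanSpace ℝ (Fin d)}

lemma norm_perpPart_eq_norm_mul_sin_angle (hv : v ≠ 0) (u : EuclideanSpace ℝ (Fin d)) :
    ‖perpPart v u‖ = ‖u‖ * sin (angle u v) := by
  have hV : 0 < ‖v‖ := norm_pos_iff.2 hv
  have hperp : (‖perpPart v u‖ * ‖v‖) ^ 2 = ‖u‖ ^ 2 * ‖v‖ ^ 2 - ⟪u, v⟫ ^ 2 := by
    rw [perpPart, mul_pow, norm_sub_sq_real, real_inner_smul_right, norm_smul, mul_pow,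
      norm_eq_abs, sq_abs]
    field_simp
    ring
  rw [← norm_mul_sin_angle_mul_norm_sq] at hperp
  have hsin := mul_nonneg (norm_nonneg u) (sin_angle_nonneg u v)
  exact mul_right_cancel₀ hV.ne' ((sq_eq_sq₀ (by positivity) (by positivity)).1 hperp)

lemma two_mul_pi_mul_nnLoss_le (hv : v ≠ 0)
    {w : EuclideanSpace ℝ (Fin d) × EuclideanSpace ℝ (Fin d)} (hw : w ∈ nnRavine v) (h₁ : w.1 ≠ 0) (h₂ : w.2 ≠ 0) (hi₁ : 0 ≤ ⟪w.1, v⟫)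
    (hi₂ : 0 ≤ ⟪w.2, v⟫) :
    2 * π * nnLoss v w ≤
      angle w.1 v * ‖perpPart v w.1‖ ^ 2 + angle w.2 v * ‖perpPart v w.2‖ ^ 2 +
        (angle w.1 v + angle w.2 v) * ‖perpPart v w.1‖ * ‖perpPart v w.2‖ := by
  have hw' : w.1 + w.2 = v := hw
  have hV : 0 < ‖v‖ := norm_pos_iff.2 hv
  have hnorm : ‖v‖ = ‖w.1‖ * cos (angle w.1 v) + ‖w.2‖ * cos (angle w.2 v) := by
    have hsum : ⟪w.1, v⟫ + ⟪w.2, v⟫ = ‖v‖ ^ 2 := by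
      rw [← inner_add_left, hw', real_inner_self_eq_norm_sq]
    refine mul_right_cancel₀ hV.ne' ?_
    linear_combination -(cos_angle_mul_norm_mul_norm w.1 v + cos_angle_mul_norm_mul_norm w.2 v
      + hsum)
  have hloss : 2 * π * nnLoss v w =
      (sin (angle w.1 v + angle w.2 v) - (angle w.1 v + angle w.2 v)
          * cos (angle w.1 v + angle w.2 v)) * ‖w.1‖ * ‖w.2‖
        - ((sin (angle w.1 v) - angle w.1 v * cos (angle w.1 v)) * ‖w.1‖ * ‖v‖
          + (sin (angle w.2 v) - angle w.2 v * cos (angle w.2 v)) * ‖w.2‖ * ‖v‖) := by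
    rw [nnLoss, angle_eq_angle_add_angle_of_add_eq hw' hv h₁ h₂ hi₁ hi₂, hw', sub_self,
      norm_zero]
    field_simp
    ring
  have hθ₁ := angle_nonneg w.1 v
  have hθ₂ := angle_nonneg w.2 v
  calc 2 * π * nnLoss v w
      ≤ (angle w.1 v + angle w.2 v) * (‖w.1‖ * sin (angle w.1 v))
          * (‖w.2‖ * sin (angle w.2 v)) :=
        hloss ▸ sin_sub_mul_cos_add_mul_sub_le hnorm hθ₁
          (angle_le_pi_div_two_of_inner_nonneg hi₁) hθ₂
          (angle_le_pi_div_two_of_inner_nonneg hi₂)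
    _ = (angle w.1 v + angle w.2 v) * ‖perpPart v w.1‖ * ‖perpPart v w.2‖ := by
        rw [norm_perpPart_eq_norm_mul_sin_angle hv, norm_perpPart_eq_norm_mul_sin_angle hv]
    _ ≤ _ := by
        have := mul_nonneg hθ₁ (sq_nonneg ‖perpPart v w.1‖)
        have := mul_nonneg hθ₂ (sq_nonneg ‖perpPart v w.2‖)
        linarith

lemma half_smul_mem_nnSol (v : EuclideanSpace ℝ (Fin d)) :
    (((1 / 2 : ℝ) • v, (1 / 2 : ℝ) • v) : EuclideanSpace ℝ (Fin d) × EuclideanSpace ℝ (Fin d))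
      ∈ nnSol v := by
  have hnorm : ‖(1 / 2 : ℝ) • v‖ = ‖v‖ / 2 := by
    rw [norm_smul]; norm_num; ring
  have hinner : ⟪(1 / 2 : ℝ) • v, v⟫ = ‖(1 / 2 : ℝ) • v‖ * ‖v‖ := by
    rw [real_inner_smul_left, real_inner_self_eq_norm_sq, hnorm]; ring
  refine ⟨by simp only [← add_smul]; norm_num, hinner, hinner, ?_, ?_, ?_, ?_⟩ <;>
    simp only [hnorm] <;> linarith [norm_nonneg v]

lemma norm_sub_le_nnDist_fst (w w' : EuclideanSpace ℝ (Fin d) × EuclideanSpace ℝ (Fin d)) :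
    ‖w.1 - w'.1‖ ≤ nnDist w w' :=
  le_sqrt_of_sq_le (le_add_of_nonneg_right (sq_nonneg _))

lemma norm_sub_le_nnDist_snd (w w' : EuclideanSpace ℝ (Fin d) × EuclideanSpace ℝ (Fin d)) :
    ‖w.2 - w'.2‖ ≤ nnDist w w' :=
  le_sqrt_of_sq_le (le_add_of_nonneg_left (sq_nonneg _))

end Ravine

theorem nn_aiming_on_ravine_general (d : ℕ)
    (v : EuclideanSpace ℝ (Fin d)) (hv : v ≠ 0) :
    ∃ δ > (0 : ℝ), ∀ w : EuclideanSpace ℝ (Fin d) × EuclideanSpace ℝ (Fin d),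
      w ∈ nnRavine v → w.1 ≠ 0 → w.2 ≠ 0 → nnDistSol v w < δ →
      2 * Real.pi * nnLoss v w ≤
        angle w.1 v * ‖perpPart v w.1‖ ^ 2 + angle w.2 v * ‖perpPart v w.2‖ ^ 2 +
          (angle w.1 v + angle w.2 v) * ‖perpPart v w.1‖ * ‖perpPart v w.2‖ := by
  refine ⟨‖v‖ / 8, by positivity, fun w hw h₁ h₂ hdist => ?_⟩
  obtain ⟨_, ⟨s, ⟨-, hs₁, hs₂, hs₁8, -, hs₂8, -⟩, rfl⟩, hws⟩ :=
    exists_lt_of_csInf_lt ((Set.nonempty_of_mem (half_smul_mem_nnSol v)).image _) hdist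
  have hi₁ := inner_pos_of_norm_sub_lt hv hs₁ (by linarith [norm_sub_le_nnDist_fst w s])
  have hi₂ := inner_pos_of_norm_sub_lt hv hs₂ (by linarith [norm_sub_le_nnDist_snd w s])
  exact two_mul_pi_mul_nnLoss_le hv hw h₁ h₂ hi₁.le hi₂.le

/-- **Aiming towards the solution set on the ravine.**
There is `δ > 0` such that for every `w = (w₁, w₂) ∈ M` with `w₁ ≠ 0`, `w₂ ≠ 0` and
`dist(w, S) < δ`:
`θ₁‖w₁^⊥‖² + θ₂‖w₂^⊥‖² + (θ₁ + θ₂)‖w₁^⊥‖‖w₂^⊥‖ ≥ 2π f(w)`,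
i.e. the aiming inequality `⟨∇f(w), w − P_S(w)⟩ ≥ f(w)`. -/
theorem nn_aiming_on_ravine (d : ℕ) (hd : 1 ≤ d)
    (v : EuclideanSpace ℝ (Fin d)) (hv : v ≠ 0) :
    ∃ δ > (0 : ℝ), ∀ w : EuclideanSpace ℝ (Fin d) × EuclideanSpace ℝ (Fin d),
      w ∈ nnRavine v → w.1 ≠ 0 → w.2 ≠ 0 → nnDistSol v w < δ →
      2 * Real.pi * nnLoss v w ≤
        angle w.1 v * ‖perpPart v w.1‖ ^ 2 + angle w.2 v * ‖perpPart v w.2‖ ^ 2 +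
          (angle w.1 v + angle w.2 v) * ‖perpPart v w.1‖ * ‖perpPart v w.2‖ :=
  nn_aiming_on_ravine_general d v hv
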